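/- Let (aₙ)_{1≤n≤N} ⊂ ℂ with a_N = 1 and b : ℝᵈ → ℂ a polynomial symbol whose homogeneous top part b_M (degree M, nonzero) satisfies ε^M b(ε^{−1}ξ) → b_M(ξ) as ε → 0 for each fixed ξ with b_M(ξ) ≠ 0. For ε > 0, let λ_ε be any root of the polynomial Σ_{n=1}^N aₙ λⁿ = b(ε^{−1}ξ). Then ε^{M/N} λ_ε^N → b_M(ξ) as ε → 0; in particular, |λ_ε| → ∞ and the N roots of the characteristic polynomial are asymptotic (after scaling by ε^{M/N}) to the N distinct N-th roots |b_M(ξ)|^{1/N} e^{iπ(η_M(ξ) + 2n)/N}, n = 1,…,N, of b_M(ξ), where e^{iπη_M(ξ)}|b_M(ξ)| = b_M(ξ). -/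

import Mathlib

/-!
Since `ε^M → 0` while `ε^M b(ε⁻¹ξ) → b_M ≠ 0`, the right-hand side `b(ε⁻¹ξ)` leaves every bounded
set; a polynomial maps bounded sets to bounded sets, so `λ_ε` does too, and there the polynomial
`Σ aₙ λⁿ` with `a_N = 1` is asymptotically equivalent to its leading term `λ^N`. Hence
`ε^M λ_ε^N ~ ε^M b(ε⁻¹ξ) → b_M`. The listed values are `c ζ^(n+1)` with
`c = |b_M|^(1/N) e^(iπη/N)` an `N`-th root of `b_M` and `ζ = e^(2πi/N)` a primitive `N`-th root
of unity, so they are the `N` distinct `N`-th roots of `b_M`.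
-/

open Real Filter Set Bornology Asymptotics
open scoped Topology

lemma Filter.Tendsto.cobounded_of_continuous_comp {α X Y : Type*} [PseudoMetricSpace X]
    [ProperSpace X] [PseudoMetricSpace Y] {g : X → Y} (hg : Continuous g) {l : Filter α}
    {z : α → X} (h : Tendsto (g ∘ z) l (cobounded Y)) : Tendsto z l (cobounded X) :=
  (tendsto_comap_iff.2 h).mono_right <| comap_cobounded_le_iff.2 fun _ hs =>
    (hs.isCompact_closure.image hg).isBounded.subset (image_mono subset_closure)

lemma Filter.Tendsto.cobounded_of_mul {α 𝕜 : Type*} [NormedField 𝕜] {l : Filter α}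
    {c f : α → 𝕜} {L : 𝕜} (hc : Tendsto c l (𝓝 0)) (hcf : Tendsto (fun x => c x * f x) l (𝓝 L))
    (hL : L ≠ 0) : Tendsto f l (cobounded 𝕜) := by
  have hc_ne : ∀ᶠ x in l, c x ≠ 0 :=
    (hcf.eventually_ne hL).mono fun _ hx => left_ne_zero_of_mul hx
  have hc_inv : Tendsto (fun x => (c x)⁻¹) l (cobounded 𝕜) :=
    tendsto_inv₀_nhdsNE_zero.comp (tendsto_nhdsWithin_iff.2 ⟨hc, hc_ne⟩)
  rw [← tendsto_norm_atTop_iff_cobounded] at hc_inv ⊢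
  refine (Tendsto.pos_mul_atTop (norm_pos_iff.2 hL) hcf.norm hc_inv).congr' ?_
  filter_upwards [hc_ne] with x hx
  rw [← norm_mul, mul_comm (c x), mul_assoc, mul_inv_cancel₀ hx, mul_one]

lemma isEquivalent_sum_mul_pow_cobounded {R : Type*} [NormedRing R] [NormMulClass R]
    {s : Finset ℕ} {N : ℕ} {a : ℕ → R} (hNs : N ∈ s) (hs : ∀ n ∈ s, n ≤ N) (haN : a N = 1) :
    (fun z : R => ∑ n ∈ s, a n * z ^ n) ~[cobounded R] (· ^ N) := by
  have hsplit : (fun z : R => ∑ n ∈ s, a n * z ^ n) =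
      fun z => ∑ n ∈ s.erase N, a n * z ^ n + z ^ N := by
    ext z
    rw [← Finset.sum_erase_add _ _ hNs, haN, one_mul]
  rw [hsplit]
  refine (IsLittleO.fun_sum fun n hn => ?_).add_isEquivalent .refl
  have hnN : n < N := (hs n (Finset.mem_of_mem_erase hn)).lt_of_ne (Finset.ne_of_mem_erase hn)
  exact (isLittleO_pow_pow_cobounded_of_lt hnN).const_mul_left _

lemma Complex.exp_pi_mul_add_two_mul_div (θ : ℝ) {N : ℕ} (hN : N ≠ 0) (k : ℕ) :
    Complex.exp (π * (θ + 2 * k) / N * Complex.I) =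
      Complex.exp (π * θ / N * Complex.I) * Complex.exp (2 * π * Complex.I / N) ^ k := by
  rw [← Complex.exp_nat_mul, ← Complex.exp_add]
  congr 1
  field_simp

lemma Complex.ofReal_rpow_inv_mul_exp_pow {r : ℝ} (hr : 0 ≤ r) (θ : ℝ) {N : ℕ} (hN : N ≠ 0) :
    (((r ^ ((1 : ℝ) / N) : ℝ) : ℂ) * Complex.exp (π * θ / N * Complex.I)) ^ N =
      Complex.exp (π * θ * Complex.I) * r := by
  rw [mul_pow, ← Complex.ofReal_pow, one_div, Real.rpow_inv_natCast_pow hr hN,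
    ← Complex.exp_nat_mul, mul_comm]
  congr 2
  field_simp

lemma IsPrimitiveRoot.mul_pow_pow {M : Type*} [CommMonoid M] {ζ : M} {N : ℕ}
    (hζ : IsPrimitiveRoot ζ N) (c : M) (k : ℕ) : (c * ζ ^ k) ^ N = c ^ N := by
  rw [mul_pow, ← pow_mul, mul_comm k, pow_mul, hζ.pow_eq_one, one_pow, mul_one]

lemma IsPrimitiveRoot.injective_mul_pow_succ {K : Type*} [CommRing K] [IsDomain K] {ζ c : K}
    {N : ℕ} (hζ : IsPrimitiveRoot ζ N) (hc : c ≠ 0) :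
    Function.Injective fun n : Fin N => c * ζ ^ ((n : ℕ) + 1) := by
  intro n m h
  have hζ0 : ζ ≠ 0 := hζ.ne_zero n.pos.ne'
  simp only [pow_succ] at h
  exact Fin.ext <| hζ.pow_inj n.isLt m.isLt <|
    mul_right_cancel₀ hζ0 (mul_left_cancel₀ hc h)

/-- Short-time eigenvalue asymptotics (Lemma 4.4): let `λ_ε` be any root of the characteristic
polynomial `Σ_{n=1}^N aₙ λⁿ = b(ε⁻¹ξ)`, where the symbol satisfies
`ε^M b(ε⁻¹ξ) → b_M(ξ) ≠ 0`.  Then `ε^M λ_ε^N → b_M(ξ)` (i.e. `(ε^{M/N}λ_ε)^N → b_M(ξ)`) and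
`|λ_ε| → ∞`; moreover the scaled limits are the `N` distinct `N`-th roots
`|b_M(ξ)|^{1/N} e^{iπ(η_M(ξ)+2n)/N}`, `n = 1,…,N`, of `b_M(ξ) = e^{iπη_M(ξ)}|b_M(ξ)|`. -/
theorem companion_eigenvalue_short_time_asymptotics
    (d N M : ℕ) (hN : 0 < N) (hM : 0 < M)
    (a : ℕ → ℂ) (haN : a N = 1)
    (ξ : EuclideanSpace ℝ (Fin d))
    (b : EuclideanSpace ℝ (Fin d) → ℂ)
    (bM : ℂ) (hbM : bM ≠ 0)
    (η : ℝ) (hη : bM = Complex.exp (Real.pi * η * Complex.I) * (‖bM‖ : ℂ))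
    (hsymb : Tendsto (fun ε : ℝ => (ε : ℂ) ^ M * b (ε⁻¹ • ξ)) (𝓝[>] 0) (𝓝 bM))
    (lam : ℝ → ℂ) (ε₀ : ℝ) (hε₀ : 0 < ε₀)
    (hroot : ∀ ε ∈ Ioo (0:ℝ) ε₀, ∑ n ∈ Finset.Icc 1 N, a n * lam ε ^ n = b (ε⁻¹ • ξ)) :
    Tendsto (fun ε : ℝ => (ε : ℂ) ^ M * lam ε ^ N) (𝓝[>] 0) (𝓝 bM) ∧
    Tendsto (fun ε : ℝ => ‖lam ε‖) (𝓝[>] 0) atTop ∧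
    (∀ n : Fin N,
      (((‖bM‖ ^ ((1:ℝ) / N) : ℝ) : ℂ) *
          Complex.exp (Real.pi * (η + 2 * ((n : ℕ) + 1)) / N * Complex.I)) ^ N = bM) ∧
    Function.Injective (fun n : Fin N =>
      (((‖bM‖ ^ ((1:ℝ) / N) : ℝ) : ℂ) *
        Complex.exp (Real.pi * (η + 2 * ((n : ℕ) + 1)) / N * Complex.I))) := by
  set P : ℂ → ℂ := fun z => ∑ n ∈ Finset.Icc 1 N, a n * z ^ n
  have hroot' : ∀ᶠ ε in 𝓝[>] (0 : ℝ), P (lam ε) = b (ε⁻¹ • ξ) :=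
    mem_of_superset (Ioo_mem_nhdsGT hε₀) hroot
  have hεM : Tendsto (fun ε : ℝ => (ε : ℂ) ^ M) (𝓝[>] 0) (𝓝 0) :=
    ((Complex.continuous_ofReal.pow M).tendsto' 0 0 (by simp [hM.ne'])).mono_left
      nhdsWithin_le_nhds
  have hlam : Tendsto lam (𝓝[>] 0) (cobounded ℂ) :=
    Tendsto.cobounded_of_continuous_comp (g := P) (by fun_prop) <|
      (hεM.cobounded_of_mul hsymb hbM).congr' (hroot'.mono fun _ h => h.symm)
  have hP : P ~[cobounded ℂ] (· ^ N) :=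
    isEquivalent_sum_mul_pow_cobounded (Finset.right_mem_Icc.2 hN)
      (fun _ hn => (Finset.mem_Icc.1 hn).2) haN
  have hpow : (fun ε => lam ε ^ N) ~[𝓝[>] 0] fun ε => b (ε⁻¹ • ξ) :=
    (hP.comp_tendsto hlam).symm.congr_right hroot'
  set ζ := Complex.exp (2 * π * Complex.I / N)
  have hζ : IsPrimitiveRoot ζ N := Complex.isPrimitiveRoot_exp N hN.ne'
  set c : ℂ := ((‖bM‖ ^ ((1 : ℝ) / N) : ℝ) : ℂ) * Complex.exp (π * η / N * Complex.I)
  have hc : c ^ N = bM := by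
    rw [Complex.ofReal_rpow_inv_mul_exp_pow (norm_nonneg bM) η hN.ne', ← hη]
  have hroots : ∀ n : Fin N, ((‖bM‖ ^ ((1:ℝ) / N) : ℝ) : ℂ) *
      Complex.exp (Real.pi * (η + 2 * ((n : ℕ) + 1)) / N * Complex.I) = c * ζ ^ ((n : ℕ) + 1) := by
    intro n
    rw [← Nat.cast_succ, Complex.exp_pi_mul_add_two_mul_div η hN.ne']
    exact (mul_assoc _ _ _).symm
  refine ⟨(IsEquivalent.refl.mul hpow).symm.tendsto_nhds hsymb,
    tendsto_norm_cobounded_atTop.comp hlam, fun n => ?_, ?_⟩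
  · rw [hroots, hζ.mul_pow_pow, hc]
  · simp only [hroots]
    exact hζ.injective_mul_pow_succ (ne_zero_pow hN.ne' (hc ▸ hbM))
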